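/- arXiv:2205.12192 — 5 statements merged into one kernel-verified Lean document; each statement's English description precedes it below -/
import Mathlib

section
/- Let G be a finite group, let C be the category of finite G-sets, and let S, T be finite G-sets. Let F_S ⊠̲ F_T : C^op × C^op → Ab be the functor (U, V) ↦ F_S(U) ⊗_ℤ F_T(V), and let × : C × C → C be the binary Cartesian product functor. Then the left Kan extension of F_S ⊠̲ F_T along the opposite of the product functor (×)^op : C^op × C^op → C^op is naturally isomorphic to F_{S×T}. -/
open CategoryTheory

/-- A finite `G`-set: a finite type equipped with a `G`-action. -/
structure FinGSet (G : Type) [Group G] : Type 1 where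
  /-- the underlying set -/
  carrier : Type
  [fintype : Fintype carrier]
  [mulAction : MulAction G carrier]

namespace FinGSet

variable {G : Type} [Group G]

instance : CoeSort (FinGSet G) Type := ⟨carrier⟩
attribute [instance] fintype mulAction

/-- Equivariant maps between finite `G`-sets. -/
@[ext]
structure Hom (S T : FinGSet G) where
  /-- the underlying function -/
  toFun : S → T
  equivariant : ∀ (g : G) (s : S), toFun (g • s) = g • toFun s

/-- The category of finite `G`-sets and equivariant maps. -/
instance : Category (FinGSet G) where
  Hom := Hom
  id S := ⟨id, fun _ _ => rfl⟩
  comp {S T U} f g := ⟨g.toFun ∘ f.toFun, fun γ s => by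
    simp only [Function.comp_apply, f.equivariant, g.equivariant]⟩
  id_comp f := Hom.ext rfl
  comp_id f := Hom.ext rfl
  assoc f g h := Hom.ext rfl

@[simp] lemma id_toFun (S : FinGSet G) (s : S) : Hom.toFun (𝟙 S) s = s := rfl

@[simp] lemma comp_toFun {S T U : FinGSet G} (f : S ⟶ T) (g : T ⟶ U) (s : S) :
    Hom.toFun (f ≫ g) s = g.toFun (f.toFun s) := rfl

end FinGSet

open FinGSet

variable {G : Type} [Group G]

/-- The coefficient system `F_S = ℤ·Map_G(−, S)` represented by a finite `G`-set `S`: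
it sends `U` to the free abelian group on the set of `G`-maps `U → S`. -/
def FS (S : FinGSet G) : (FinGSet G)ᵒᵖ ⥤ AddCommGrpCat where
  obj U := AddCommGrpCat.of (FreeAbelianGroup (U.unop ⟶ S))
  map {U V} f := AddCommGrpCat.ofHom (FreeAbelianGroup.map fun φ => f.unop ≫ φ)
  map_id U := by
    have h : (fun φ : U.unop ⟶ S => (𝟙 U).unop ≫ φ) = id :=
      funext fun φ => Category.id_comp φ
    show AddCommGrpCat.ofHom (FreeAbelianGroup.map fun φ => (𝟙 U).unop ≫ φ) = _
    rw [h, FreeAbelianGroup.map_id]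
    rfl
  map_comp {U V W} f g := by
    have h : (fun φ : U.unop ⟶ S => (f ≫ g).unop ≫ φ) =
        (fun φ : V.unop ⟶ S => g.unop ≫ φ) ∘ (fun φ : U.unop ⟶ S => f.unop ≫ φ) :=
      funext fun φ => by simp
    show AddCommGrpCat.ofHom (FreeAbelianGroup.map fun φ => (f ≫ g).unop ≫ φ) = _
    rw [h, FreeAbelianGroup.map_comp]
    rfl


/-- Pointwise (on pure tensors) extensionality for additive maps out of a tensor product. -/
lemma tensorAddHom_ext {A B C : Type} [AddCommGroup A] [AddCommGroup B] [AddCommGroup C]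
    {f g : TensorProduct ℤ A B →+ C} (h : ∀ (a : A) (b : B), f (a ⊗ₜ b) = g (a ⊗ₜ b)) :
    f = g := by
  ext x
  refine TensorProduct.induction_on x (by simp) h (fun u v hu hv => by simp [hu, hv])

/-- The Cartesian product of finite `G`-sets, with the diagonal `G`-action. -/
def prodGSet (S T : FinGSet G) : FinGSet G where
  carrier := S × T

/-- The Cartesian product functor on (opposites of) finite `G`-sets. -/
def prodOpFunctor : (FinGSet G)ᵒᵖ × (FinGSet G)ᵒᵖ ⥤ (FinGSet G)ᵒᵖ where
  obj P := Opposite.op (prodGSet P.1.unop P.2.unop)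
  map {P Q} u := Quiver.Hom.op
    (⟨fun q => (u.1.unop.toFun q.1, u.2.unop.toFun q.2), fun g q => by
      show (u.1.unop.toFun (g • q).1, u.2.unop.toFun (g • q).2)
        = g • (u.1.unop.toFun q.1, u.2.unop.toFun q.2)
      have e1 : (g • q).1 = g • q.1 := rfl
      have e2 : (g • q).2 = g • q.2 := rfl
      rw [e1, e2, u.1.unop.equivariant, u.2.unop.equivariant]
      rfl⟩ : prodGSet Q.1.unop Q.2.unop ⟶ prodGSet P.1.unop P.2.unop)
  map_id P := Quiver.Hom.unop_inj (FinGSet.Hom.ext rfl)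
  map_comp u v := Quiver.Hom.unop_inj (FinGSet.Hom.ext rfl)

/-- The external product `F_S ⊠ F_T : Cᵒᵖ × Cᵒᵖ → Ab`, `(U, V) ↦ F_S(U) ⊗_ℤ F_T(V)`. -/
noncomputable def boxFS (S T : FinGSet G) :
    (FinGSet G)ᵒᵖ × (FinGSet G)ᵒᵖ ⥤ AddCommGrpCat where
  obj P := AddCommGrpCat.of
    (TensorProduct ℤ (FreeAbelianGroup (P.1.unop ⟶ S)) (FreeAbelianGroup (P.2.unop ⟶ T)))
  map {P Q} u := AddCommGrpCat.ofHom (TensorProduct.map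
      (FreeAbelianGroup.map fun φ => u.1.unop ≫ φ).toIntLinearMap
      (FreeAbelianGroup.map fun ψ => u.2.unop ≫ ψ).toIntLinearMap).toAddMonoidHom
  map_id P := AddCommGrpCat.hom_ext (tensorAddHom_ext (fun y z => by
    have h1 : (fun φ : P.1.unop ⟶ S => (𝟙 P.1).unop ≫ φ) = id :=
      funext fun φ => Category.id_comp φ
    have h2 : (fun ψ : P.2.unop ⟶ T => (𝟙 P.2).unop ≫ ψ) = id :=
      funext fun ψ => Category.id_comp ψ
    show (TensorProduct.map
      (FreeAbelianGroup.map fun φ => (𝟙 P.1).unop ≫ φ).toIntLinearMap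
      (FreeAbelianGroup.map fun ψ => (𝟙 P.2).unop ≫ ψ).toIntLinearMap) (y ⊗ₜ z) = y ⊗ₜ z
    rw [TensorProduct.map_tmul, h1, h2, FreeAbelianGroup.map_id, FreeAbelianGroup.map_id]
    rfl))
  map_comp {P Q R} u v := AddCommGrpCat.hom_ext (tensorAddHom_ext (fun y z => by
    have h1 : (fun φ : P.1.unop ⟶ S => (u.1 ≫ v.1).unop ≫ φ) =
        (fun φ : Q.1.unop ⟶ S => v.1.unop ≫ φ) ∘ (fun φ : P.1.unop ⟶ S => u.1.unop ≫ φ) :=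
      funext fun φ => by simp
    have h2 : (fun ψ : P.2.unop ⟶ T => (u.2 ≫ v.2).unop ≫ ψ) =
        (fun ψ : Q.2.unop ⟶ T => v.2.unop ≫ ψ) ∘ (fun ψ : P.2.unop ⟶ T => u.2.unop ≫ ψ) :=
      funext fun ψ => by simp
    show (TensorProduct.map
        (FreeAbelianGroup.map fun φ => (u.1 ≫ v.1).unop ≫ φ).toIntLinearMap
        (FreeAbelianGroup.map fun ψ => (u.2 ≫ v.2).unop ≫ ψ).toIntLinearMap) (y ⊗ₜ z)
      = (TensorProduct.map
          (FreeAbelianGroup.map fun φ : Q.1.unop ⟶ S => v.1.unop ≫ φ).toIntLinearMap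
          (FreeAbelianGroup.map fun ψ : Q.2.unop ⟶ T => v.2.unop ≫ ψ).toIntLinearMap)
        ((TensorProduct.map
          (FreeAbelianGroup.map fun φ : P.1.unop ⟶ S => u.1.unop ≫ φ).toIntLinearMap
          (FreeAbelianGroup.map fun ψ : P.2.unop ⟶ T => u.2.unop ≫ ψ).toIntLinearMap) (y ⊗ₜ z))
    rw [TensorProduct.map_tmul, TensorProduct.map_tmul, TensorProduct.map_tmul, h1, h2,
      FreeAbelianGroup.map_comp, FreeAbelianGroup.map_comp]
    rfl))

/-! ### Auxiliary constructions -/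

section Aux

open FreeAbelianGroup

/-- First projection from a product of `G`-sets. -/
def fstHom (S T : FinGSet G) : prodGSet S T ⟶ S := ⟨Prod.fst, fun _ _ => rfl⟩

/-- Second projection from a product of `G`-sets. -/
def sndHom (S T : FinGSet G) : prodGSet S T ⟶ T := ⟨Prod.snd, fun _ _ => rfl⟩

/-- Diagonal map of a `G`-set. -/
def diagHom (U : FinGSet G) : U ⟶ prodGSet U U := ⟨fun u => (u, u), fun _ _ => rfl⟩

/-- Product of two equivariant maps. -/
def prodMapHom {U V U' V' : FinGSet G} (f : U ⟶ U') (g : V ⟶ V') :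
    prodGSet U V ⟶ prodGSet U' V' :=
  ⟨fun p => (f.toFun p.1, g.toFun p.2), fun γ p => by
    show (f.toFun (γ • p).1, g.toFun (γ • p).2) = γ • (f.toFun p.1, g.toFun p.2)
    have e1 : (γ • p).1 = γ • p.1 := rfl
    have e2 : (γ • p).2 = γ • p.2 := rfl
    rw [e1, e2, f.equivariant, g.equivariant]
    rfl⟩

lemma prodOpFunctor_map_op {U V U' V' : FinGSet G} (f : U' ⟶ U) (g : V' ⟶ V) :
    prodOpFunctor.map
      (show (Opposite.op U, Opposite.op V) ⟶ (Opposite.op U', Opposite.op V') from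
        (f.op, g.op)) = (prodMapHom f g).op :=
  Quiver.Hom.unop_inj (FinGSet.Hom.ext rfl)

/-- Extensionality on pure tensors of generators. -/
lemma boxHom_ext {A B : Type} {M : Type} [AddCommGroup M]
    {f g : TensorProduct ℤ (FreeAbelianGroup A) (FreeAbelianGroup B) →+ M}
    (h : ∀ a b, f (of a ⊗ₜ of b) = g (of a ⊗ₜ of b)) : f = g := by
  refine tensorAddHom_ext (fun x y => ?_)
  induction x using FreeAbelianGroup.induction_on with
  | zero => simp [TensorProduct.zero_tmul]
  | of a =>
    induction y using FreeAbelianGroup.induction_on with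
    | zero => simp [TensorProduct.tmul_zero]
    | of b => exact h a b
    | neg b hb => rw [TensorProduct.tmul_neg, map_neg, map_neg, hb]
    | add y1 y2 h1 h2 => rw [TensorProduct.tmul_add, map_add, map_add, h1, h2]
  | neg x hx => rw [TensorProduct.neg_tmul, map_neg, map_neg, hx]
  | add x1 x2 h1 h2 => rw [TensorProduct.add_tmul, map_add, map_add, h1, h2]

/-- Lift of a two-variable function to a map out of a tensor product of free abelian
groups. -/
noncomputable def boxLift {A B : Type} {M : Type} [AddCommGroup M] (f : A → B → M) :
    TensorProduct ℤ (FreeAbelianGroup A) (FreeAbelianGroup B) →+ M :=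
  (TensorProduct.lift ((FreeAbelianGroup.lift (fun a =>
      (FreeAbelianGroup.lift (f a)).toIntLinearMap)).toIntLinearMap)).toAddMonoidHom

@[simp] lemma boxLift_of_of {A B : Type} {M : Type} [AddCommGroup M] (f : A → B → M)
    (a : A) (b : B) : boxLift f (of a ⊗ₜ of b) = f a b := by
  simp [boxLift, TensorProduct.lift.tmul]

variable (S T : FinGSet G)

/-- The comparison map `F_S ⊠ F_T ⟶ (×)ᵒᵖ ⋙ F_{S×T}`. -/
noncomputable def alphaNat : boxFS S T ⟶ prodOpFunctor ⋙ FS (prodGSet S T) where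
  app P := AddCommGrpCat.ofHom (boxLift (fun φ ψ => of (prodMapHom φ ψ)))
  naturality {P Q} u := AddCommGrpCat.hom_ext (boxHom_ext (fun φ ψ => by
    show boxLift (fun φ ψ => of (prodMapHom φ ψ))
        ((TensorProduct.map
          (FreeAbelianGroup.map fun φ : P.1.unop ⟶ S => u.1.unop ≫ φ).toIntLinearMap
          (FreeAbelianGroup.map fun ψ : P.2.unop ⟶ T => u.2.unop ≫ ψ).toIntLinearMap)
          (of φ ⊗ₜ of ψ))
      = FreeAbelianGroup.map (fun χ => (prodOpFunctor.map u).unop ≫ χ)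
          (boxLift (fun φ ψ => of (prodMapHom φ ψ)) (of φ ⊗ₜ of ψ))
    rw [TensorProduct.map_tmul]
    simp only [AddMonoidHom.coe_toIntLinearMap, FreeAbelianGroup.map_of_apply,
      boxLift_of_of]
    exact congrArg of (FinGSet.Hom.ext rfl)))

variable {S T} {H : (FinGSet G)ᵒᵖ ⥤ AddCommGrpCat} (β : boxFS S T ⟶ prodOpFunctor ⋙ H)

lemma boxFS_map_tmul_of {U V U' V' : FinGSet G} (f : U' ⟶ U) (g : V' ⟶ V)
    (φ : U ⟶ S) (ψ : V ⟶ T) :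
    ((boxFS S T).map
      (((f.op, g.op) : (Opposite.op U, Opposite.op V) ⟶ (Opposite.op U', Opposite.op V'))))
      (of φ ⊗ₜ[ℤ] of ψ) = of (f ≫ φ) ⊗ₜ[ℤ] of (g ≫ ψ) := by
  show (TensorProduct.map
      (FreeAbelianGroup.map fun χ : U ⟶ S => f ≫ χ).toIntLinearMap
      (FreeAbelianGroup.map fun χ : V ⟶ T => g ≫ χ).toIntLinearMap)
      (of φ ⊗ₜ[ℤ] of ψ) = of (f ≫ φ) ⊗ₜ[ℤ] of (g ≫ ψ)
  rw [TensorProduct.map_tmul]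
  simp [FreeAbelianGroup.map_of_apply]

lemma beta_nat {U V U' V' : FinGSet G} (f : U' ⟶ U) (g : V' ⟶ V)
    (φ : U ⟶ S) (ψ : V ⟶ T) :
    β.app (Opposite.op U', Opposite.op V') (of (f ≫ φ) ⊗ₜ[ℤ] of (g ≫ ψ))
      = H.map (prodMapHom f g).op
          (β.app (Opposite.op U, Opposite.op V) (of φ ⊗ₜ[ℤ] of ψ)) := by
  have h := β.naturality
    (((f.op, g.op) : (Opposite.op U, Opposite.op V) ⟶ (Opposite.op U', Opposite.op V')))
  have h2 := ConcreteCategory.congr_hom h (of φ ⊗ₜ[ℤ] of ψ)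
  simp only [Functor.comp_map] at h2
  rw [show prodOpFunctor.map
      (((f.op, g.op) : (Opposite.op U, Opposite.op V) ⟶ (Opposite.op U', Opposite.op V')))
      = (prodMapHom f g).op from Quiver.Hom.unop_inj (FinGSet.Hom.ext rfl)] at h2
  rw [← boxFS_map_tmul_of f g φ ψ]
  exact h2

lemma map_map_eq {X Y Z : (FinGSet G)ᵒᵖ} (a : X ⟶ Y) (b : Y ⟶ Z) (x : H.obj X) :
    H.map b (H.map a x) = H.map (a ≫ b) x := by
  rw [H.map_comp]; rfl

/-- The descent of an extension `β` along `alphaNat`. -/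
noncomputable def descNat : FS (prodGSet S T) ⟶ H where
  app U := AddCommGrpCat.ofHom (FreeAbelianGroup.lift (fun φ =>
    (H.map (diagHom U.unop).op)
      ((β.app (U, U)) (of (φ ≫ fstHom S T) ⊗ₜ[ℤ] of (φ ≫ sndHom S T)))))
  naturality {U V} f := AddCommGrpCat.hom_ext (FreeAbelianGroup.lift_ext _ _ (fun φ => by
    show (FreeAbelianGroup.lift (fun χ =>
        (H.map (diagHom V.unop).op)
          ((β.app (V, V)) (of (χ ≫ fstHom S T) ⊗ₜ[ℤ] of (χ ≫ sndHom S T)))))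
        (FreeAbelianGroup.map (fun χ => f.unop ≫ χ) (of φ))
      = H.map f ((FreeAbelianGroup.lift (fun χ =>
        (H.map (diagHom U.unop).op)
          ((β.app (U, U)) (of (χ ≫ fstHom S T) ⊗ₜ[ℤ] of (χ ≫ sndHom S T))))) (of φ))
    rw [FreeAbelianGroup.map_of_apply, FreeAbelianGroup.lift_apply_of, FreeAbelianGroup.lift_apply_of,
      Category.assoc, Category.assoc, beta_nat β f.unop f.unop]
    erw [map_map_eq, map_map_eq]
    have e : (prodMapHom f.unop f.unop).op ≫ (diagHom V.unop).op
        = (diagHom U.unop).op ≫ f := by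
      rw [← op_comp,
        show diagHom V.unop ≫ prodMapHom f.unop f.unop = f.unop ≫ diagHom U.unop from
          FinGSet.Hom.ext rfl, op_comp, Quiver.Hom.op_unop]
    rw [e]))

lemma descNat_fac (P : (FinGSet G)ᵒᵖ × (FinGSet G)ᵒᵖ) :
    (alphaNat S T).app P ≫ (Functor.whiskerLeft prodOpFunctor (descNat β)).app P
      = β.app P :=
  AddCommGrpCat.hom_ext (boxHom_ext (fun φ ψ => by
    show (descNat β).app (prodOpFunctor.obj P)
        (((alphaNat S T).app P) (of φ ⊗ₜ[ℤ] of ψ)) = β.app P (of φ ⊗ₜ[ℤ] of ψ)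
    show (FreeAbelianGroup.lift (fun χ =>
        (H.map (diagHom (prodGSet P.1.unop P.2.unop)).op)
          ((β.app (Opposite.op (prodGSet P.1.unop P.2.unop),
              Opposite.op (prodGSet P.1.unop P.2.unop)))
            (of (χ ≫ fstHom S T) ⊗ₜ[ℤ] of (χ ≫ sndHom S T)))))
        (boxLift (fun φ ψ => of (prodMapHom φ ψ)) (of φ ⊗ₜ[ℤ] of ψ)) = _
    rw [boxLift_of_of, FreeAbelianGroup.lift_apply_of]
    have e1 : prodMapHom φ ψ ≫ fstHom S T = fstHom P.1.unop P.2.unop ≫ φ :=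
      FinGSet.Hom.ext rfl
    have e2 : prodMapHom φ ψ ≫ sndHom S T = sndHom P.1.unop P.2.unop ≫ ψ :=
      FinGSet.Hom.ext rfl
    rw [e1, e2, beta_nat β (fstHom P.1.unop P.2.unop) (sndHom P.1.unop P.2.unop) φ ψ]
    erw [map_map_eq]
    have e3 : ((prodMapHom (fstHom P.1.unop P.2.unop) (sndHom P.1.unop P.2.unop)).op ≫
        (diagHom (prodGSet P.1.unop P.2.unop)).op)
        = 𝟙 (Opposite.op (prodGSet P.1.unop P.2.unop)) := by
      rw [← op_comp,
        show diagHom (prodGSet P.1.unop P.2.unop) ≫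
          prodMapHom (fstHom P.1.unop P.2.unop) (sndHom P.1.unop P.2.unop)
          = 𝟙 (prodGSet P.1.unop P.2.unop) from FinGSet.Hom.ext rfl, op_id]
    rw [e3, H.map_id]
    rfl))

end Aux

/-- For finite `G`-sets `S, T`, the representable coefficient system
`F_{S×T}` is the (pointwise) left Kan extension of `F_S ⊠ F_T` along the (opposite of the)
Cartesian product functor `C × C → C` on finite `G`-sets. -/
theorem stmt_1 (G : Type) [Group G] [Fintype G] (S T : FinGSet G) :
    ∃ α : boxFS S T ⟶ prodOpFunctor ⋙ FS (prodGSet S T),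
      (FS (prodGSet S T)).IsLeftKanExtension α := by
  refine ⟨alphaNat S T, ⟨⟨Limits.IsInitial.ofUniqueHom
    (fun g => StructuredArrow.homMk (descNat g.hom)
      (NatTrans.ext (funext (fun P => descNat_fac g.hom P))))
    (fun g m => ?_)⟩⟩⟩
  apply StructuredArrow.hom_ext
  show m.right = descNat g.hom
  refine NatTrans.ext (funext fun U => ?_)
  refine AddCommGrpCat.hom_ext (FreeAbelianGroup.lift_ext _ _ (fun φ => ?_))
  set φ1 := φ ≫ fstHom S T with hφ1
  set φ2 := φ ≫ sndHom S T with hφ2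
  have e1 : diagHom U.unop ≫ prodMapHom φ1 φ2 = φ := FinGSet.Hom.ext rfl
  have e2 : (FS (prodGSet S T)).map (diagHom U.unop).op (FreeAbelianGroup.of (prodMapHom φ1 φ2))
      = FreeAbelianGroup.of φ := by
    show FreeAbelianGroup.map (fun χ => ((diagHom U.unop).op).unop ≫ χ)
      (FreeAbelianGroup.of (prodMapHom φ1 φ2)) = FreeAbelianGroup.of φ
    rw [FreeAbelianGroup.map_of_apply]
    exact congrArg FreeAbelianGroup.of e1
  have e3 := ConcreteCategory.congr_hom (m.right.naturality (diagHom U.unop).op)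
    (FreeAbelianGroup.of (prodMapHom φ1 φ2))
  have e5 : (alphaNat S T).app (U, U) (FreeAbelianGroup.of φ1 ⊗ₜ[ℤ] FreeAbelianGroup.of φ2) = FreeAbelianGroup.of (prodMapHom φ1 φ2) :=
    boxLift_of_of _ _ _
  have e4 : m.right.app (Opposite.op (prodGSet U.unop U.unop))
        ((alphaNat S T).app (U, U) (FreeAbelianGroup.of φ1 ⊗ₜ[ℤ] FreeAbelianGroup.of φ2))
      = g.hom.app (U, U) (FreeAbelianGroup.of φ1 ⊗ₜ[ℤ] FreeAbelianGroup.of φ2) :=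
    ConcreteCategory.congr_hom (NatTrans.congr_app (StructuredArrow.w m) (U, U))
      (FreeAbelianGroup.of φ1 ⊗ₜ[ℤ] FreeAbelianGroup.of φ2)
  calc m.right.app U (FreeAbelianGroup.of φ)
      = m.right.app U ((FS (prodGSet S T)).map (diagHom U.unop).op
          (FreeAbelianGroup.of (prodMapHom φ1 φ2))) := by rw [e2]
    _ = (g.right.map (diagHom U.unop).op)
          (m.right.app (Opposite.op (prodGSet U.unop U.unop))
            (FreeAbelianGroup.of (prodMapHom φ1 φ2))) := e3
    _ = (g.right.map (diagHom U.unop).op)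
          (g.hom.app (U, U) (FreeAbelianGroup.of φ1 ⊗ₜ[ℤ] FreeAbelianGroup.of φ2)) := by rw [← e5, e4]
    _ = (descNat g.hom).app U (FreeAbelianGroup.of φ) := by
          show _ = FreeAbelianGroup.lift _ (FreeAbelianGroup.of φ)
          rw [FreeAbelianGroup.lift_apply_of]
end

section
/- Let C = ⟨α⟩ be a finite cyclic group and let 0 → K → N → M → 0 be a short exact sequence of ℤ[C]-modules. Then the sequence 0 → K^C → N^C → M^C → 0 of fixed points is short exact (equivalently, N^C → M^C is surjective) if and only if the sequence 0 → K_C → N_C → M_C → 0 of cofixed points is short exact (equivalently, K_C → N_C is injective). -/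
variable {G : Type*} [Group G]

/-- The `H`-fixed points of a `G`-module `M`, as an additive subgroup. -/
def fixedPts (H : Subgroup G) (M : Type*) [AddCommGroup M] [DistribMulAction G M] :
    AddSubgroup M where
  carrier := {m | ∀ σ ∈ H, σ • m = m}
  zero_mem' := fun σ _ => smul_zero σ
  add_mem' := fun ha hb σ hσ => by rw [smul_add, ha σ hσ, hb σ hσ]
  neg_mem' := fun ha σ hσ => by rw [smul_neg, ha σ hσ]

/-- The subgroup of `M` generated by the elements `m - σ • m` for `σ ∈ H`. -/
def cofixedRel (H : Subgroup G) (M : Type*) [AddCommGroup M] [DistribMulAction G M] :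
    AddSubgroup M :=
  AddSubgroup.closure {x | ∃ (m : M) (σ : G), σ ∈ H ∧ x = m - σ • m}

/-- The `H`-cofixed points (coinvariants) of a `G`-module `M`. -/
abbrev cofixedPts (H : Subgroup G) (M : Type*) [AddCommGroup M] [DistribMulAction G M] :=
  M ⧸ cofixedRel H M

/-- The map induced on `H`-fixed points by an equivariant map. -/
def fixedMap (H : Subgroup G) {M N : Type*} [AddCommGroup M] [DistribMulAction G M]
    [AddCommGroup N] [DistribMulAction G N] (f : M →+ N)
    (hf : ∀ (σ : G) (m : M), f (σ • m) = σ • f m) :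
    fixedPts H M →+ fixedPts H N :=
  AddMonoidHom.codRestrict (f.domRestrict (fixedPts H M)) _ (fun m σ hσ => by
    rw [AddMonoidHom.domRestrict_apply, ← hf, m.2 σ hσ])

/-- The map induced on `H`-cofixed points by an equivariant map. -/
def cofixedMap (H : Subgroup G) {M N : Type*} [AddCommGroup M] [DistribMulAction G M]
    [AddCommGroup N] [DistribMulAction G N] (f : M →+ N)
    (hf : ∀ (σ : G) (m : M), f (σ • m) = σ • f m) :
    cofixedPts H M →+ cofixedPts H N :=
  QuotientAddGroup.map _ _ f (by
    rw [cofixedRel, AddSubgroup.closure_le]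
    rintro x ⟨m, σ, hσ, rfl⟩
    simp only [SetLike.mem_coe, AddSubgroup.mem_comap, map_sub]
    exact AddSubgroup.subset_closure ⟨f m, σ, hσ, by rw [hf]⟩)

/-- Membership in the fixed points is detected by a generator. -/
lemma mem_fixed_iff' {α : G} (hα : ∀ x : G, x ∈ Subgroup.zpowers α)
    {M : Type*} [AddCommGroup M] [DistribMulAction G M] (m : M) :
    m ∈ fixedPts (⊤ : Subgroup G) M ↔ α • m = m := by
  constructor
  · exact fun h => h α trivial
  · intro h σ _
    have hinv : α⁻¹ • m = m := by
      conv_lhs => rw [← h, inv_smul_smul]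
    have key : ∀ j : ℤ, α ^ j • m = m := by
      intro j
      induction j using Int.induction_on with
      | zero => simp
      | succ j ih => rw [zpow_add_one, mul_smul, h, ih]
      | pred j ih => rw [zpow_sub_one, mul_smul, hinv, ih]
    obtain ⟨j, hj⟩ := hα σ
    rw [← hj]
    exact key j

/-- Membership in the cofixed relation subgroup is detected by a generator. -/
lemma mem_cofixed_iff' {α : G} (hα : ∀ x : G, x ∈ Subgroup.zpowers α)
    {M : Type*} [AddCommGroup M] [DistribMulAction G M] (x : M) :
    x ∈ cofixedRel (⊤ : Subgroup G) M ↔ ∃ m : M, x = m - α • m := by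
  let R : AddSubgroup M :=
    { carrier := {x | ∃ m : M, x = m - α • m}
      zero_mem' := ⟨0, by simp⟩
      add_mem' := by
        rintro a b ⟨m, rfl⟩ ⟨m', rfl⟩
        exact ⟨m + m', by rw [smul_add]; abel⟩
      neg_mem' := by
        rintro a ⟨m, rfl⟩
        exact ⟨-m, by rw [smul_neg]; abel⟩ }
  constructor
  · intro h
    have key : ∀ (j : ℤ) (m : M), m - α ^ j • m ∈ R := by
      intro j
      induction j using Int.induction_on with
      | zero => intro m; simpa using R.zero_mem
      | succ j ih =>
          intro m
          have h1 : m - α ^ ((j : ℤ) + 1) • m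
              = (m - α ^ (j : ℤ) • m) + (α ^ (j : ℤ) • m - α • α ^ (j : ℤ) • m) := by
            rw [← mul_smul, show α * α ^ (j : ℤ) = α ^ ((j : ℤ) + 1) by group]
            abel
          rw [h1]
          exact R.add_mem (ih m) ⟨_, rfl⟩
      | pred j ih =>
          intro m
          have h1 : m - α ^ (-(j : ℤ) - 1) • m
              = (m - α ^ (-(j : ℤ)) • m) - (α ^ (-(j : ℤ) - 1) • m - α • α ^ (-(j : ℤ) - 1) • m) := by
            rw [← mul_smul, show α * α ^ (-(j : ℤ) - 1) = α ^ (-(j : ℤ)) by group]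
            abel
          rw [h1]
          exact R.sub_mem (ih m) ⟨_, rfl⟩
    have hle : cofixedRel (⊤ : Subgroup G) M ≤ R := by
      rw [cofixedRel, AddSubgroup.closure_le]
      rintro x ⟨m, σ, -, rfl⟩
      obtain ⟨j, hj⟩ := hα σ
      rw [← hj]
      exact key j m
    exact hle h
  · rintro ⟨m, rfl⟩
    exact AddSubgroup.subset_closure ⟨m, α, trivial, rfl⟩

/-- Let `C = ⟨α⟩` be a finite cyclic group and `0 → K → N → M → 0` a short
exact sequence of `ℤ[C]`-modules.  Then the sequence of fixed points
`0 → K^C → N^C → M^C → 0` is short exact if and only if the sequence of cofixed points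
`0 → K_C → N_C → M_C → 0` is short exact. -/
theorem stmt_5 (C : Type*) [Group C] [Finite C] (α : C)
    (hα : ∀ x : C, x ∈ Subgroup.zpowers α)
    (K N M : Type*) [AddCommGroup K] [DistribMulAction C K]
    [AddCommGroup N] [DistribMulAction C N] [AddCommGroup M] [DistribMulAction C M]
    (i : K →+ N) (p : N →+ M)
    (hi : ∀ (σ : C) (k : K), i (σ • k) = σ • i k)
    (hp : ∀ (σ : C) (n : N), p (σ • n) = σ • p n)
    (hinj : Function.Injective i) (hsurj : Function.Surjective p)
    (hexact : Function.Exact ⇑i ⇑p) :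
    (Function.Injective ⇑(fixedMap ⊤ i hi) ∧
      Function.Exact ⇑(fixedMap ⊤ i hi) ⇑(fixedMap ⊤ p hp) ∧
      Function.Surjective ⇑(fixedMap ⊤ p hp)) ↔
    (Function.Injective ⇑(cofixedMap ⊤ i hi) ∧
      Function.Exact ⇑(cofixedMap ⊤ i hi) ⇑(cofixedMap ⊤ p hp) ∧
      Function.Surjective ⇑(cofixedMap ⊤ p hp)) := by
  -- preliminary facts
  have hfi_inj : Function.Injective ⇑(fixedMap ⊤ i hi) := by
    intro a b hab
    exact Subtype.ext (hinj (congrArg Subtype.val hab))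
  have hf_exact : Function.Exact ⇑(fixedMap ⊤ i hi) ⇑(fixedMap ⊤ p hp) := by
    intro n
    constructor
    · intro h
      have hpn : p n.1 = 0 := congrArg Subtype.val h
      obtain ⟨k, hk⟩ := (hexact _).mp hpn
      have hkfix : k ∈ fixedPts (⊤ : Subgroup C) K := by
        rw [mem_fixed_iff' hα]
        apply hinj
        rw [hi, hk, (mem_fixed_iff' hα n.1).mp n.2]
      exact ⟨⟨k, hkfix⟩, Subtype.ext hk⟩
    · rintro ⟨k, rfl⟩
      exact Subtype.ext ((hexact _).mpr ⟨k.1, rfl⟩)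
  have hcp_surj : Function.Surjective ⇑(cofixedMap ⊤ p hp) := by
    intro m
    induction m using QuotientAddGroup.induction_on with
    | H m =>
      obtain ⟨n, rfl⟩ := hsurj m
      exact ⟨QuotientAddGroup.mk n, rfl⟩
  have hc_exact : Function.Exact ⇑(cofixedMap ⊤ i hi) ⇑(cofixedMap ⊤ p hp) := by
    intro x
    induction x using QuotientAddGroup.induction_on with
    | H n =>
      constructor
      · intro h
        have hpn : p n ∈ cofixedRel (⊤ : Subgroup C) M := by
          rwa [show (cofixedMap ⊤ p hp) (QuotientAddGroup.mk n)
                = QuotientAddGroup.mk (p n) from rfl,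
            QuotientAddGroup.eq_zero_iff] at h
        obtain ⟨m, hm⟩ := (mem_cofixed_iff' hα _).mp hpn
        obtain ⟨n', hn'⟩ := hsurj m
        have : p (n - (n' - α • n')) = 0 := by
          rw [map_sub, map_sub, hp, hn', hm, sub_self]
        obtain ⟨k, hk⟩ := (hexact _).mp this
        refine ⟨QuotientAddGroup.mk k, ?_⟩
        show QuotientAddGroup.mk (i k) = QuotientAddGroup.mk n
        rw [hk]
        rw [QuotientAddGroup.eq]
        have : -(n - (n' - α • n')) + n = n' - α • n' := by abel
        rw [this]
        exact (mem_cofixed_iff' hα _).mpr ⟨n', rfl⟩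
      · rintro ⟨k, hkn⟩
        rw [← hkn]
        induction k using QuotientAddGroup.induction_on with
        | H k =>
          show QuotientAddGroup.mk (p (i k)) = 0
          rw [(hexact _).mpr ⟨k, rfl⟩]
          rfl
  -- the key equivalence: surjectivity on fixed points ↔ injectivity on cofixed points
  constructor
  · rintro ⟨-, -, hsurjf⟩
    refine ⟨?_, hc_exact, hcp_surj⟩
    rw [injective_iff_map_eq_zero]
    intro x hx
    induction x using QuotientAddGroup.induction_on with
    | H k =>
      rw [show (cofixedMap ⊤ i hi) (QuotientAddGroup.mk k)
            = QuotientAddGroup.mk (i k) from rfl,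
        QuotientAddGroup.eq_zero_iff] at hx
      obtain ⟨n, hn⟩ := (mem_cofixed_iff' hα _).mp hx
      -- p n is fixed
      have hpn : p n ∈ fixedPts (⊤ : Subgroup C) M := by
        rw [mem_fixed_iff' hα]
        have : p (i k) = 0 := (hexact _).mpr ⟨k, rfl⟩
        rw [hn, map_sub, hp, sub_eq_zero] at this
        exact this.symm
      obtain ⟨⟨n₀, hn₀fix⟩, hn₀⟩ := hsurjf ⟨p n, hpn⟩
      have hpn₀ : p n₀ = p n := congrArg Subtype.val hn₀
      have : p (n - n₀) = 0 := by rw [map_sub, hpn₀, sub_self]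
      obtain ⟨k', hk'⟩ := (hexact _).mp this
      have hαn₀ : α • n₀ = n₀ := (mem_fixed_iff' hα n₀).mp hn₀fix
      have : i k = i (k' - α • k') := by
        rw [hn, map_sub, hi, hk', smul_sub, hαn₀]
        abel
      rw [QuotientAddGroup.eq_zero_iff]
      exact (mem_cofixed_iff' hα _).mpr ⟨k', by rw [hinj this]⟩
  · rintro ⟨hinjc, -, -⟩
    refine ⟨hfi_inj, hf_exact, ?_⟩
    rintro ⟨m, hmfix⟩
    obtain ⟨n, hn⟩ := hsurj m
    have hαm : α • m = m := (mem_fixed_iff' hα m).mp hmfix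
    have h0 : p (n - α • n) = 0 := by rw [map_sub, hp, hn, hαm, sub_self]
    obtain ⟨k, hk⟩ := (hexact _).mp h0
    have hk0 : (QuotientAddGroup.mk k : cofixedPts (⊤ : Subgroup C) K) = 0 := by
      apply hinjc
      show QuotientAddGroup.mk (i k) = (cofixedMap ⊤ i hi) 0
      rw [map_zero, hk, QuotientAddGroup.eq_zero_iff]
      exact (mem_cofixed_iff' hα _).mpr ⟨n, rfl⟩
    rw [QuotientAddGroup.eq_zero_iff] at hk0
    obtain ⟨k', hk'⟩ := (mem_cofixed_iff' hα _).mp hk0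
    have hfix : n - i k' ∈ fixedPts (⊤ : Subgroup C) N := by
      rw [mem_fixed_iff' hα, smul_sub, ← hi]
      have : α • n = n - i k := by rw [hk]; abel
      rw [this, hk', map_sub, hi]
      abel
    refine ⟨⟨n - i k', hfix⟩, Subtype.ext ?_⟩
    show p (n - i k') = m
    rw [map_sub, (hexact _).mpr ⟨k', rfl⟩, hn, sub_zero]
end

section
/- Let G be a finite cyclic group and let 0 → K → N → M → 0 be a short exact sequence of ℤ[G]-modules. Then the induced sequence of H-fixed points 0 → K^H → N^H → M^H → 0 is short exact for every subgroup H ≤ G if and only if the induced sequence of H-cofixed points 0 → K_H → N_H → M_H → 0 is short exact for every subgroup H ≤ G. -/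
variable {G : Type*} [Group G]

section Auxiliary

variable {G₀ : Type*} [Group G₀]

/-- The "difference" homomorphism `x ↦ x - τ • x`. -/
def dHom (τ : G₀) (X : Type*) [AddCommGroup X] [DistribMulAction G₀ X] : X →+ X where
  toFun := fun x => x - τ • x
  map_zero' := by simp
  map_add' := fun a b => by
    show (a + b) - τ • (a + b) = (a - τ • a) + (b - τ • b)
    rw [smul_add]; abel

@[simp] lemma dHom_apply (τ : G₀) {X : Type*} [AddCommGroup X] [DistribMulAction G₀ X] (x : X) :
    dHom τ X x = x - τ • x := rfl

lemma mem_fixedPts_iff {H : Subgroup G₀} {τ : G₀} (hH : H ≤ Subgroup.zpowers τ)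
    (hτ : τ ∈ H) {X : Type*} [AddCommGroup X] [DistribMulAction G₀ X] {x : X} :
    x ∈ fixedPts H X ↔ τ • x = x := by
  constructor
  · exact fun h => h τ hτ
  · intro h σ hσ
    have h1 : τ ∈ MulAction.stabilizer G₀ x := h
    exact Subgroup.zpowers_le.mpr h1 (hH hσ)

lemma sub_zpow_mem_range {τ : G₀} {X : Type*} [AddCommGroup X] [DistribMulAction G₀ X]
    (n : ℤ) (m : X) : m - τ ^ n • m ∈ (dHom τ X).range := by
  induction n using Int.induction_on with
  | zero => simpa using (AddSubgroup.zero_mem (dHom τ X).range)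
  | succ k ih =>
      have h1 : τ ^ ((k : ℤ) + 1) • m = τ • τ ^ (k : ℤ) • m := by
        rw [← mul_smul]; congr 1; group
      have : m - τ ^ ((k : ℤ) + 1) • m
          = (m - τ ^ (k : ℤ) • m) + dHom τ X (τ ^ (k : ℤ) • m) := by
        rw [dHom_apply, h1]; abel
      rw [this]
      exact AddSubgroup.add_mem _ ih ⟨_, rfl⟩
  | pred k ih =>
      have h1 : τ • τ ^ (-(k : ℤ) - 1) • m = τ ^ (-(k : ℤ)) • m := by
        rw [← mul_smul]; congr 1; group
      have : m - τ ^ (-(k : ℤ) - 1) • m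
          = (m - τ ^ (-(k : ℤ)) • m) - dHom τ X (τ ^ (-(k : ℤ) - 1) • m) := by
        rw [dHom_apply, h1]; abel
      rw [this]
      exact AddSubgroup.sub_mem _ ih ⟨_, rfl⟩

lemma cofixedRel_eq {H : Subgroup G₀} {τ : G₀} (hH : H ≤ Subgroup.zpowers τ) (hτ : τ ∈ H)
    (X : Type*) [AddCommGroup X] [DistribMulAction G₀ X] :
    cofixedRel H X = (dHom τ X).range := by
  apply le_antisymm
  · rw [cofixedRel, AddSubgroup.closure_le]
    rintro x ⟨m, σ, hσ, rfl⟩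
    obtain ⟨n, rfl⟩ := Subgroup.mem_zpowers_iff.mp (hH hσ)
    exact sub_zpow_mem_range n m
  · rintro x ⟨y, rfl⟩
    exact AddSubgroup.subset_closure ⟨y, τ, hτ, rfl⟩

end Auxiliary

/-- Let `G` be a finite cyclic group and `0 → K → N → M → 0` a short exact
sequence of `ℤ[G]`-modules.  Then the induced sequence of `H`-fixed points
`0 → K^H → N^H → M^H → 0` is short exact for every subgroup `H ≤ G` if and only if the
induced sequence of `H`-cofixed points `0 → K_H → N_H → M_H → 0` is short exact for every
subgroup `H ≤ G`. -/
theorem stmt_6 (G : Type*) [Group G] [Finite G] [IsCyclic G]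
    (K N M : Type*) [AddCommGroup K] [DistribMulAction G K]
    [AddCommGroup N] [DistribMulAction G N] [AddCommGroup M] [DistribMulAction G M]
    (i : K →+ N) (p : N →+ M)
    (hi : ∀ (σ : G) (k : K), i (σ • k) = σ • i k)
    (hp : ∀ (σ : G) (n : N), p (σ • n) = σ • p n)
    (hinj : Function.Injective i) (hsurj : Function.Surjective p)
    (hexact : Function.Exact ⇑i ⇑p) :
    (∀ H : Subgroup G,
      Function.Injective ⇑(fixedMap H i hi) ∧
      Function.Exact ⇑(fixedMap H i hi) ⇑(fixedMap H p hp) ∧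
      Function.Surjective ⇑(fixedMap H p hp)) ↔
    (∀ H : Subgroup G,
      Function.Injective ⇑(cofixedMap H i hi) ∧
      Function.Exact ⇑(cofixedMap H i hi) ⇑(cofixedMap H p hp) ∧
      Function.Surjective ⇑(cofixedMap H p hp)) := by
  -- A generator for every subgroup
  have hcyc : ∀ H : Subgroup G, ∃ τ : G, τ ∈ H ∧ H ≤ Subgroup.zpowers τ := by
    intro H
    obtain ⟨⟨τ, hτ⟩, hgen⟩ := IsCyclic.exists_generator (α := H)
    refine ⟨τ, hτ, fun σ hσ => ?_⟩
    obtain ⟨n, hn⟩ := Subgroup.mem_zpowers_iff.mp (hgen ⟨σ, hσ⟩)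
    refine Subgroup.mem_zpowers_iff.mpr ⟨n, ?_⟩
    have := congrArg (Subtype.val) hn
    simpa using this
  have hpi : ∀ k : K, p (i k) = 0 := fun k => (hexact (i k)).mpr ⟨k, rfl⟩
  -- coercion lemmas
  have fcoe : ∀ (H : Subgroup G) (x : fixedPts H K), ((fixedMap H i hi x : fixedPts H N) : N) = i x := fun _ _ => rfl
  have fcoe' : ∀ (H : Subgroup G) (x : fixedPts H N), ((fixedMap H p hp x : fixedPts H M) : M) = p x := fun _ _ => rfl
  have cmk : ∀ (H : Subgroup G) (k : K),
      cofixedMap H i hi (QuotientAddGroup.mk k) = QuotientAddGroup.mk (i k) := fun _ _ => rfl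
  have cmk' : ∀ (H : Subgroup G) (n : N),
      cofixedMap H p hp (QuotientAddGroup.mk n) = QuotientAddGroup.mk (p n) := fun _ _ => rfl
  -- fixed points: injectivity always holds
  have fixInj : ∀ H : Subgroup G, Function.Injective ⇑(fixedMap H i hi) := by
    intro H x y hxy
    exact Subtype.ext (hinj (by rw [← fcoe H x, ← fcoe H y, hxy]))
  -- fixed points: exactness always holds
  have fixExact : ∀ H : Subgroup G, Function.Exact ⇑(fixedMap H i hi) ⇑(fixedMap H p hp) := by
    intro H y
    constructor
    · intro h0
      have hy : p (y : N) = 0 := by rw [← fcoe' H y, h0]; rfl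
      obtain ⟨k, hk⟩ := (hexact (y : N)).mp hy
      refine ⟨⟨k, fun σ hσ => hinj ?_⟩, Subtype.ext (by rw [fcoe]; exact hk)⟩
      rw [hi, hk, y.2 σ hσ]
    · rintro ⟨x, rfl⟩
      exact Subtype.ext (by rw [fcoe', fcoe]; exact hpi _)
  -- cofixed points: surjectivity always holds
  have cosurj : ∀ H : Subgroup G, Function.Surjective ⇑(cofixedMap H p hp) := by
    intro H q
    obtain ⟨m, rfl⟩ := QuotientAddGroup.mk_surjective q
    obtain ⟨n, rfl⟩ := hsurj m
    exact ⟨QuotientAddGroup.mk n, cmk' H n⟩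
  -- cofixed points: exactness always holds
  have coExact : ∀ H : Subgroup G, Function.Exact ⇑(cofixedMap H i hi) ⇑(cofixedMap H p hp) := by
    intro H
    obtain ⟨τ, hτ, hH⟩ := hcyc H
    intro q
    obtain ⟨n, rfl⟩ := QuotientAddGroup.mk_surjective q
    constructor
    · intro h0
      have hm : p n ∈ cofixedRel H M := by
        rw [← QuotientAddGroup.eq_zero_iff]; rw [cmk'] at h0; exact h0
      rw [cofixedRel_eq hH hτ] at hm
      obtain ⟨m, hm⟩ := hm
      rw [dHom_apply] at hm
      obtain ⟨n₀, rfl⟩ := hsurj m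
      have hker : p (n - dHom τ N n₀) = 0 := by
        rw [map_sub, dHom_apply, map_sub, hp, hm, sub_self]
      obtain ⟨k, hk⟩ := (hexact _).mp hker
      refine ⟨QuotientAddGroup.mk k, ?_⟩
      rw [cmk, hk, QuotientAddGroup.eq]
      have heq : -(n - dHom τ N n₀) + n = dHom τ N n₀ := by abel
      rw [heq, cofixedRel_eq hH hτ]
      exact ⟨n₀, rfl⟩
    · rintro ⟨x, hx⟩
      obtain ⟨k, rfl⟩ := QuotientAddGroup.mk_surjective x
      rw [cmk] at hx
      rw [← hx, cmk', hpi]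
      rfl
  -- key equivalence per subgroup
  have key : ∀ H : Subgroup G,
      Function.Surjective ⇑(fixedMap H p hp) ↔ Function.Injective ⇑(cofixedMap H i hi) := by
    intro H
    obtain ⟨τ, hτ, hH⟩ := hcyc H
    constructor
    · intro hs
      rw [injective_iff_map_eq_zero]
      intro q hq
      obtain ⟨k, rfl⟩ := QuotientAddGroup.mk_surjective q
      have hik : i k ∈ cofixedRel H N := by
        rw [← QuotientAddGroup.eq_zero_iff]; rw [cmk] at hq; exact hq
      rw [cofixedRel_eq hH hτ] at hik
      obtain ⟨n, hn⟩ := hik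
      rw [dHom_apply] at hn
      have hpn : p n ∈ fixedPts H M := by
        rw [mem_fixedPts_iff hH hτ]
        have h2 : p (n - τ • n) = 0 := by rw [hn, hpi]
        rw [map_sub, hp, sub_eq_zero] at h2
        exact h2.symm
      obtain ⟨y, hy⟩ := hs ⟨p n, hpn⟩
      have hy' : p (y : N) = p n := by
        rw [← fcoe' H y, hy]
      have hker : p (n - (y : N)) = 0 := by rw [map_sub, hy', sub_self]
      obtain ⟨k', hk'⟩ := (hexact _).mp hker
      have hyfix : τ • (y : N) = (y : N) := y.2 τ hτ
      have hkk : k = k' - τ • k' := by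
        apply hinj
        rw [map_sub, hi, hk', smul_sub, hyfix, ← hn]
        abel
      rw [QuotientAddGroup.eq_zero_iff, cofixedRel_eq hH hτ]
      exact ⟨k', by rw [dHom_apply, ← hkk]⟩
    · intro hinj' y
      obtain ⟨n, hn⟩ := hsurj (y : M)
      have hker : p (n - τ • n) = 0 := by
        rw [map_sub, hp, hn, (mem_fixedPts_iff hH hτ).mp y.2, sub_self]
      obtain ⟨k, hk⟩ := (hexact _).mp hker
      have h0 : cofixedMap H i hi (QuotientAddGroup.mk k) = 0 := by
        rw [cmk, QuotientAddGroup.eq_zero_iff, cofixedRel_eq hH hτ]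
        exact ⟨n, by rw [dHom_apply, hk]⟩
      have hk0 : (QuotientAddGroup.mk k : cofixedPts H K) = 0 := by
        apply hinj'
        rw [h0, map_zero]
      have hkmem : k ∈ cofixedRel H K := (QuotientAddGroup.eq_zero_iff _).mp hk0
      rw [cofixedRel_eq hH hτ] at hkmem
      obtain ⟨k', hk'⟩ := hkmem
      rw [dHom_apply] at hk'
      refine ⟨⟨n - i k', ?_⟩, Subtype.ext ?_⟩
      · rw [mem_fixedPts_iff hH hτ]
        have hz : (n - i k') - τ • (n - i k') = 0 := by
          rw [smul_sub, ← hi,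
            show n - i k' - (τ • n - i (τ • k')) = (n - τ • n) - i (k' - τ • k') from by
              rw [map_sub]; abel,
            hk', hk, sub_self]
        rw [sub_eq_zero] at hz
        exact hz.symm
      · rw [fcoe', map_sub, hpi k', sub_zero, hn]
  constructor
  · intro hfix H
    exact ⟨(key H).mp (hfix H).2.2, coExact H, cosurj H⟩
  · intro hcof H
    exact ⟨fixInj H, fixExact H, (key H).mpr (hcof H).1⟩
end

section
/- Let G = ℤ/2 × ℤ/2 with generators α and h, let M = ℤ[G]/(αh − α + h − 1) with quotient map ε : ℤ[G] → M, let N = ℤ[G] ⊕ ℤ where ℤ carries the trivial G-action, and let λ : N → M be the ℤ[G]-module map λ(x, n) = ε(x) + n·ε(1 + α). Then for every subgroup H ≤ G, the restriction of λ to H-fixed points λ^H : N^H → M^H is surjective. Consequently, with K = ker(λ), the sequence 0 → K^H → N^H → M^H → 0 is short exact for every subgroup H ≤ G. -/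
/-- The Klein four-group `G = ℤ/2 × ℤ/2` (written multiplicatively). -/
abbrev KleinFour : Type := Multiplicative (ZMod 2) × Multiplicative (ZMod 2)

/-- The generator `α` of the first `ℤ/2` factor. -/
def gα : KleinFour := (Multiplicative.ofAdd 1, 1)

/-- The generator `h` of the second `ℤ/2` factor. -/
def gh : KleinFour := (1, Multiplicative.ofAdd 1)

/-- The integral group ring `ℤ[ℤ/2 × ℤ/2]`. -/
abbrev GrpRing : Type := MonoidAlgebra ℤ KleinFour

/-- The element `αh − α + h − 1` of `ℤ[ℤ/2 × ℤ/2]`. -/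
noncomputable def relEl : GrpRing :=
  MonoidAlgebra.single (gα * gh) 1 - MonoidAlgebra.single gα 1 + MonoidAlgebra.single gh 1 - 1

/-- The module `M = ℤ[G]/(αh − α + h − 1)`. -/
abbrev Mq : Type := GrpRing ⧸ Ideal.span {relEl}

/-- The quotient map `ε : ℤ[G] → M`. -/
noncomputable def εq : GrpRing →+* Mq := Ideal.Quotient.mk (Ideal.span {relEl})

/-- The `H`-fixed points of `M`, as an additive subgroup. -/
noncomputable def fixMq (H : Subgroup KleinFour) : AddSubgroup Mq where
  carrier := {m | ∀ σ ∈ H, (MonoidAlgebra.single σ (1 : ℤ) : GrpRing) • m = m}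
  zero_mem' := fun σ _ => smul_zero _
  add_mem' := fun ha hb σ hσ => by rw [smul_add, ha σ hσ, hb σ hσ]
  neg_mem' := fun ha σ hσ => by rw [smul_neg, ha σ hσ]

/-- The module `N = ℤ[G] ⊕ ℤ`, with `G` acting by multiplication on `ℤ[G]` and trivially
on `ℤ`; its `H`-fixed points as an additive subgroup. -/
noncomputable def fixN (H : Subgroup KleinFour) : AddSubgroup (GrpRing × ℤ) where
  carrier := {p | ∀ σ ∈ H, MonoidAlgebra.single σ (1 : ℤ) * p.1 = p.1}
  zero_mem' := fun σ _ => mul_zero _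
  add_mem' := fun ha hb σ hσ => by rw [Prod.fst_add, mul_add, ha σ hσ, hb σ hσ]
  neg_mem' := fun ha σ hσ => by rw [Prod.fst_neg, mul_neg, ha σ hσ]

/-- The `ℤ[G]`-module map `λ : N = ℤ[G] ⊕ ℤ → M`, `λ(x, n) = ε(x) + n·ε(1 + α)`. -/
noncomputable def lam : GrpRing × ℤ →+ Mq :=
  AddMonoidHom.mk' (fun p => εq p.1 + p.2 • εq (1 + MonoidAlgebra.single gα 1))
    (fun p q => by
      simp only [Prod.fst_add, Prod.snd_add, map_add, add_zsmul]
      abel)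

abbrev V : Type := ℤ × ℤ × ℤ
def v (g : KleinFour) : V :=
  if g = gα * gh then (1,1,-1) else if g = gα then (0,1,0) else if g = gh then (0,0,1) else (1,0,0)
noncomputable def f0 : GrpRing →+ V := (Finsupp.liftAddHom fun g => zmultiplesHom V (v g)).comp
  MonoidAlgebra.coeffAddEquiv.toAddMonoidHom

lemma f0_single (g : KleinFour) (k : ℤ) : f0 (MonoidAlgebra.single g k) = k • v g := by
  exact (Finsupp.liftAddHom_apply_single (fun g => zmultiplesHom V (v g)) g k :)

lemma hv : ∀ g : KleinFour, v (gα*gh*g) - v (gα*g) + v (gh*g) - v g = 0 := by decide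

lemma f0_rel_mul (x : GrpRing) : f0 (relEl * x) = 0 := by
  induction x using MonoidAlgebra.induction_linear with
  | zero => rw [mul_zero, map_zero]
  | add f g hf hg => rw [mul_add, map_add, hf, hg, add_zero]
  | single g k =>
    have expand : relEl * MonoidAlgebra.single g k =
        MonoidAlgebra.single (gα*gh*g) k - MonoidAlgebra.single (gα*g) k
          + MonoidAlgebra.single (gh*g) k - MonoidAlgebra.single g k := by
      simp [relEl, sub_mul, add_mul, MonoidAlgebra.single_mul_single]
    rw [expand, map_sub, map_add, map_sub, f0_single, f0_single, f0_single, f0_single,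
      ← smul_sub, ← smul_add, ← smul_sub, hv g, smul_zero]

noncomputable def c3 : Mq →+ V :=
  AddMonoidHom.mk' (fun m => Quotient.liftOn' m f0 (fun a b h => by
      have hab : -a + b ∈ Ideal.span {relEl} := QuotientAddGroup.leftRel_apply.mp h
      obtain ⟨z, hz⟩ := Ideal.mem_span_singleton.mp hab
      have h0 : f0 (-a + b) = 0 := by rw [hz]; exact f0_rel_mul z
      rw [map_add, map_neg] at h0
      exact (neg_add_eq_zero.mp h0)))
    (fun x y => Quotient.inductionOn₂' x y fun a b => map_add f0 a b)

lemma c3_eps (x : GrpRing) : c3 (εq x) = f0 x := rfl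

noncomputable def S : V →+ Mq :=
  AddMonoidHom.mk' (fun w => εq (MonoidAlgebra.single 1 w.1 + MonoidAlgebra.single gα w.2.1
      + MonoidAlgebra.single gh w.2.2))
    (fun w w' => by
      simp only [Prod.fst_add, Prod.snd_add, MonoidAlgebra.single_add, ← map_add]
      congr 1
      abel)

lemma h4 : ∀ g : KleinFour, g = 1 ∨ g = gα ∨ g = gh ∨ g = gα * gh := by decide

lemma S_single (g : KleinFour) (k : ℤ) : S (k • v g) = εq (MonoidAlgebra.single g k) := by
  rw [map_zsmul]
  have hk : MonoidAlgebra.single g k = k • MonoidAlgebra.single g (1:ℤ) := by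
    rw [MonoidAlgebra.smul_single, smul_eq_mul, mul_one]
  rw [hk, map_zsmul]
  congr 1
  rcases h4 g with h | h | h | h <;> subst h
  · rw [(by decide : v (1:KleinFour) = ((1:ℤ),0,0))]
    show εq (MonoidAlgebra.single 1 1 + MonoidAlgebra.single gα 0 + MonoidAlgebra.single gh 0) = _
    simp
  · rw [(by decide : v gα = ((0:ℤ),1,0))]
    show εq (MonoidAlgebra.single 1 0 + MonoidAlgebra.single gα 1 + MonoidAlgebra.single gh 0) = _
    simp
  · rw [(by decide : v gh = ((0:ℤ),0,1))]
    show εq (MonoidAlgebra.single 1 0 + MonoidAlgebra.single gα 0 + MonoidAlgebra.single gh 1) = _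
    simp
  · rw [(by decide : v (gα*gh) = ((1:ℤ),1,-1))]
    show εq (MonoidAlgebra.single 1 1 + MonoidAlgebra.single gα 1 + MonoidAlgebra.single gh (-1)) = _
    rw [εq, Ideal.Quotient.eq]
    have : MonoidAlgebra.single (1:KleinFour) (1:ℤ) + MonoidAlgebra.single gα 1
        + MonoidAlgebra.single gh (-1) - MonoidAlgebra.single (gα*gh) 1 = -relEl := by
      have hn : MonoidAlgebra.single gh (-1:ℤ) = -MonoidAlgebra.single gh 1 :=
        (MonoidAlgebra.single_neg gh (1:ℤ) :)
      rw [relEl, MonoidAlgebra.one_def, hn]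
      abel
    rw [this]
    exact neg_mem (Ideal.subset_span rfl)

lemma S_f0 (x : GrpRing) : S (f0 x) = εq x := by
  induction x using MonoidAlgebra.induction_linear with
  | zero => simp
  | add f g hf hg => rw [map_add, map_add, hf, hg, map_add]
  | single g k => rw [(f0_single g k :), S_single]

lemma reprM (m : Mq) : S (c3 m) = m := by
  obtain ⟨x, rfl⟩ := Ideal.Quotient.mk_surjective m
  exact S_f0 x

lemma c3_inj {m m' : Mq} (h : c3 m = c3 m') : m = m' := by
  have := congrArg S h
  rwa [reprM, reprM] at this

lemma smul_eps (r x : GrpRing) : r • (εq x) = εq (r * x) := rfl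

lemma S_apply (w : V) : S w = εq (MonoidAlgebra.single 1 w.1 + MonoidAlgebra.single gα w.2.1
    + MonoidAlgebra.single gh w.2.2) := rfl

lemma c3_act (σ : KleinFour) (m : Mq) :
    c3 ((MonoidAlgebra.single σ (1:ℤ) : GrpRing) • m)
      = (c3 m).1 • v σ + (c3 m).2.1 • v (σ * gα) + (c3 m).2.2 • v (σ * gh) := by
  conv_lhs => rw [← reprM m]
  rw [S_apply, smul_eps, mul_add, mul_add, MonoidAlgebra.single_mul_single,
    MonoidAlgebra.single_mul_single, MonoidAlgebra.single_mul_single, mul_one, one_mul,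
    one_mul, one_mul, c3_eps, map_add, map_add, f0_single, f0_single, f0_single]

lemma fixed_eα (σ : KleinFour) :
    (MonoidAlgebra.single σ (1:ℤ) : GrpRing) • εq (1 + MonoidAlgebra.single gα 1)
      = εq (1 + MonoidAlgebra.single gα 1) := by
  apply c3_inj
  rw [smul_eps]
  simp only [MonoidAlgebra.one_def, mul_add, MonoidAlgebra.single_mul_single, mul_one,
    one_mul, c3_eps, map_add, f0_single, one_smul]
  exact (by decide : ∀ τ : KleinFour, v τ + v (τ * gα) = v 1 + v gα) σ


lemma lam_apply (p : GrpRing × ℤ) :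
    lam p = εq p.1 + p.2 • εq (1 + MonoidAlgebra.single gα 1) := rfl

lemma c3_lam (p : GrpRing × ℤ) :
    c3 (lam p) = f0 p.1 + p.2 • (((1:ℤ),1,0) : V) := by
  rw [lam_apply, map_add, map_zsmul, c3_eps, c3_eps, MonoidAlgebra.one_def, map_add,
    f0_single, f0_single, one_smul, one_smul,
    (by decide : v (1:KleinFour) = ((1:ℤ),0,0)), (by decide : v gα = ((0:ℤ),1,0)),
    (by decide : (((1:ℤ),0,0):V) + ((0:ℤ),1,0) = ((1:ℤ),1,0))]

lemma surjH (H : Subgroup KleinFour) : ∀ m ∈ fixMq H, ∃ p ∈ fixN H, lam p = m := by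
  intro m hm
  by_cases hα : gα ∈ H
  · rcases hE : c3 m with ⟨a, b, c⟩
    have h1 : c3 ((MonoidAlgebra.single gα (1:ℤ) : GrpRing) • m) = c3 m :=
      congrArg c3 (hm gα hα)
    rw [c3_act, hE, (by decide : v gα = ((0:ℤ),1,0)), (by decide : v (gα*gα) = ((1:ℤ),0,0)),
      (by decide : v (gα*gh) = ((1:ℤ),1,-1))] at h1
    simp only [Prod.smul_mk, smul_eq_mul, Prod.mk_add_mk, Prod.mk.injEq,
      mul_zero, mul_one, zero_add, add_zero, mul_neg_one] at h1
    obtain ⟨e1, e2, e3⟩ := h1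
    refine ⟨(0, a), fun σ _ => mul_zero _, ?_⟩
    apply c3_inj
    rw [c3_lam, hE]
    simp only [map_zero, zero_add, Prod.smul_mk, smul_eq_mul, mul_one, mul_zero,
      Prod.mk.injEq, eq_self_iff_true, true_and, and_true]
    omega
  · by_cases hh : gh ∈ H
    · have hαh : gα * gh ∉ H := fun hc => hα (by
        have h2 := H.mul_mem hc hh
        rwa [(by decide : gα * gh * gh = gα)] at h2)
      rcases hE : c3 m with ⟨a, b, c⟩
      have h1 : c3 ((MonoidAlgebra.single gh (1:ℤ) : GrpRing) • m) = c3 m :=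
        congrArg c3 (hm gh hh)
      rw [c3_act, hE, (by decide : v gh = ((0:ℤ),0,1)), (by decide : v (gh*gα) = ((1:ℤ),1,-1)),
        (by decide : v (gh*gh) = ((1:ℤ),0,0))] at h1
      simp only [Prod.smul_mk, smul_eq_mul, Prod.mk_add_mk, Prod.mk.injEq,
        mul_zero, mul_one, zero_add, add_zero, mul_neg_one] at h1
      obtain ⟨e1, e2, e3⟩ := h1
      refine ⟨(c • ((1:GrpRing) + MonoidAlgebra.single gh 1), b), ?_, ?_⟩
      · intro σ hσ
        rcases h4 σ with h|h|h|h <;> subst h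
        · show MonoidAlgebra.single (1:KleinFour) (1:ℤ) * _ = _
          rw [← MonoidAlgebra.one_def, one_mul]
        · exact absurd hσ hα
        · show MonoidAlgebra.single gh (1:ℤ) * _ = _
          rw [mul_smul_comm]
          congr 1
          rw [mul_add, mul_one, MonoidAlgebra.single_mul_single, mul_one,
            (by decide : gh*gh = (1:KleinFour)), ← MonoidAlgebra.one_def, add_comm]
        · exact absurd hσ hαh
      · apply c3_inj
        rw [c3_lam, hE]
        show f0 (c • ((1:GrpRing) + MonoidAlgebra.single gh 1)) + _ = _
        rw [map_zsmul, MonoidAlgebra.one_def, map_add, f0_single, f0_single, one_smul,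
          one_smul, (by decide : v (1:KleinFour) = ((1:ℤ),0,0)),
          (by decide : v gh = ((0:ℤ),0,1))]
        simp only [Prod.smul_mk, smul_eq_mul, Prod.mk_add_mk, Prod.mk.injEq,
          mul_zero, mul_one, zero_add, add_zero, eq_self_iff_true, true_and, and_true]
        omega
    · by_cases hαh : gα * gh ∈ H
      · rcases hE : c3 m with ⟨a, b, c⟩
        have h1 : c3 ((MonoidAlgebra.single (gα*gh) (1:ℤ) : GrpRing) • m) = c3 m :=
          congrArg c3 (hm _ hαh)
        rw [c3_act, hE, (by decide : v (gα*gh) = ((1:ℤ),1,-1)),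
          (by decide : v (gα*gh*gα) = ((0:ℤ),0,1)),
          (by decide : v (gα*gh*gh) = ((0:ℤ),1,0))] at h1
        simp only [Prod.smul_mk, smul_eq_mul, Prod.mk_add_mk, Prod.mk.injEq,
          mul_zero, mul_one, zero_add, add_zero, mul_neg_one] at h1
        obtain ⟨e1, e2, e3⟩ := h1
        refine ⟨(c • (MonoidAlgebra.single gα (1:ℤ) + MonoidAlgebra.single gh 1), a), ?_, ?_⟩
        · intro σ hσ
          rcases h4 σ with h|h|h|h <;> subst h
          · show MonoidAlgebra.single (1:KleinFour) (1:ℤ) * _ = _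
            rw [← MonoidAlgebra.one_def, one_mul]
          · exact absurd hσ hα
          · exact absurd hσ hh
          · show MonoidAlgebra.single (gα*gh) (1:ℤ) * _ = _
            rw [mul_smul_comm]
            congr 1
            rw [mul_add, MonoidAlgebra.single_mul_single, MonoidAlgebra.single_mul_single,
              (by decide : gα*gh*gα = gh), (by decide : gα*gh*gh = gα), add_comm,
              one_mul]
        · apply c3_inj
          rw [c3_lam, hE]
          show f0 (c • (MonoidAlgebra.single gα (1:ℤ) + MonoidAlgebra.single gh 1)) + _ = _
          rw [map_zsmul, map_add, f0_single, f0_single, one_smul, one_smul,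
            (by decide : v gα = ((0:ℤ),1,0)), (by decide : v gh = ((0:ℤ),0,1))]
          simp only [Prod.smul_mk, smul_eq_mul, Prod.mk_add_mk, Prod.mk.injEq,
            mul_zero, mul_one, zero_add, add_zero, eq_self_iff_true, true_and, and_true]
          omega
      · obtain ⟨x, hx⟩ := Ideal.Quotient.mk_surjective m
        refine ⟨(x, 0), ?_, ?_⟩
        · intro σ hσ
          rcases h4 σ with h|h|h|h <;> subst h
          · show MonoidAlgebra.single (1:KleinFour) (1:ℤ) * _ = _
            rw [← MonoidAlgebra.one_def, one_mul]
          · exact absurd hσ hα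
          · exact absurd hσ hh
          · exact absurd hσ hαh
        · rw [lam_apply, zero_smul, add_zero]
          exact hx

/-- With `G = ℤ/2 × ℤ/2`, `M = ℤ[G]/(αh − α + h − 1)`, `N = ℤ[G] ⊕ ℤ` and
`λ(x, n) = ε(x) + n·ε(1 + α)`: for every subgroup `H ≤ G` the restriction of `λ` to
`H`-fixed points is surjective onto `M^H`, and consequently, with `K = ker λ`, the sequence
`0 → K^H → N^H → M^H → 0` is short exact for every subgroup `H ≤ G`. -/
theorem stmt_9 :
    (∀ H : Subgroup KleinFour, ∀ m ∈ fixMq H, ∃ p ∈ fixN H, lam p = m) ∧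
    (∀ H : Subgroup KleinFour,
      (∀ p ∈ fixN H, lam p ∈ fixMq H) ∧
      Function.Injective
        (AddSubgroup.inclusion (inf_le_right : lam.ker ⊓ fixN H ≤ fixN H)) ∧
      (∀ p ∈ fixN H, (lam p = 0 ↔ p ∈ lam.ker ⊓ fixN H)) ∧
      (∀ m ∈ fixMq H, ∃ p ∈ fixN H, lam p = m)) := by
  have closure : ∀ H : Subgroup KleinFour, ∀ p ∈ fixN H, lam p ∈ fixMq H := by
    intro H p hp σ hσ
    show (MonoidAlgebra.single σ (1:ℤ) : GrpRing) • lam p = lam p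
    rw [lam_apply, smul_add, smul_eps, hp σ hσ, smul_comm, fixed_eα]
  refine ⟨surjH, fun H => ⟨closure H, AddSubgroup.inclusion_injective _, ?_, surjH H⟩⟩
  intro p hp
  constructor
  · exact fun h => AddSubgroup.mem_inf.mpr ⟨AddMonoidHom.mem_ker.mpr h, hp⟩
  · exact fun h => AddMonoidHom.mem_ker.mp (AddSubgroup.mem_inf.mp h).1
end

section
/- Let G = ℤ/2 × ℤ/2 with generators α and h, and let M = ℤ[G]/(αh − α + h − 1). Then M is a free ℤ-module of rank 3 with basis the images of 1, h, and α under the quotient map ε : ℤ[G] → M. -/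
def vv (x : KleinFour) : Fin 3 → ℤ :=
  if x = 1 then ![1,0,0] else if x = gh then ![0,1,0] else if x = gα then ![0,0,1]
  else ![1,-1,1]

noncomputable def f₀ : GrpRing →ₗ[ℤ] (Fin 3 → ℤ) :=
  Finsupp.lsum ℤ (fun x => LinearMap.toSpanSingleton ℤ _ (vv x)) ∘ₗ
    (MonoidAlgebra.coeffLinearEquiv ℤ : GrpRing ≃ₗ[ℤ] (KleinFour →₀ ℤ)).toLinearMap

lemma f₀_single (a : KleinFour) (b : ℤ) : f₀ (MonoidAlgebra.single a b) = b • vv a := by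
  exact Finsupp.sum_single_index (by simp)

lemma vsum : ∀ a : KleinFour,
    vv (a * (gα * gh)) - vv (a * gα) + vv (a * gh) - vv a = 0 := by decide

lemma cases4 : ∀ a : KleinFour, a = 1 ∨ a = gh ∨ a = gα ∨ a = gα * gh := by decide

lemma key : ∀ x : GrpRing, f₀ (x * relEl) = 0 := by
  intro x
  induction x using MonoidAlgebra.induction_linear with
  | zero => rw [zero_mul, map_zero]
  | add f g hf hg => rw [add_mul, map_add, hf, hg, add_zero]
  | single a b =>
    have h1 : (1 : GrpRing) = MonoidAlgebra.single 1 1 := MonoidAlgebra.one_def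
    rw [relEl, h1, mul_sub, mul_add, mul_sub]
    simp only [MonoidAlgebra.single_mul_single, mul_one]
    rw [map_sub, map_add, map_sub, f₀_single, f₀_single, f₀_single, f₀_single]
    have := vsum a
    rw [← mul_assoc]
    have h2 : b • vv (a * gα * gh) - b • vv (a * gα) + b • vv (a * gh) - b • vv a
        = b • (vv (a * gα * gh) - vv (a * gα) + vv (a * gh) - vv a) := by
      rw [smul_sub, smul_add, smul_sub]
    rw [h2, mul_assoc] at *
    rw [this, smul_zero]


/-- With `G = ℤ/2 × ℤ/2` (generators `α`, `h`), the module
`M = ℤ[G]/(αh − α + h − 1)` is a free `ℤ`-module of rank 3 with basis the images of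
`1`, `h` and `α` under the quotient map `ε`. -/
theorem stmt_12 :
    ∃ b : Module.Basis (Fin 3) ℤ Mq,
      b 0 = εq 1 ∧
      b 1 = εq (MonoidAlgebra.single gh 1) ∧
      b 2 = εq (MonoidAlgebra.single gα 1) := by
  classical
  set w : Fin 3 → Mq := ![εq 1, εq (MonoidAlgebra.single gh 1), εq (MonoidAlgebra.single gα 1)]
    with hw
  have hrel : εq relEl = 0 := Ideal.Quotient.eq_zero_iff_mem.2 (Ideal.subset_span rfl)
  have hεsmul : ∀ (c : ℤ) (x : GrpRing), εq (c • x) = c • εq x := fun c x => by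
    rw [zsmul_eq_mul, zsmul_eq_mul, map_mul, map_intCast]
  -- linear independence
  have hli : LinearIndependent ℤ w := by
    rw [Fintype.linearIndependent_iff]
    intro c hc
    rw [hw] at hc
    rw [Fin.sum_univ_three] at hc
    simp only [Matrix.cons_val_zero, Matrix.cons_val_one, Matrix.head_cons,
      Matrix.cons_val_two, Matrix.tail_cons] at hc
    rw [← hεsmul, ← hεsmul, ← hεsmul, ← map_add, ← map_add] at hc
    have hmem : c 0 • (1 : GrpRing) + c 1 • MonoidAlgebra.single gh 1
        + c 2 • MonoidAlgebra.single gα 1 ∈ Ideal.span {relEl} :=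
      Ideal.Quotient.eq_zero_iff_mem.1 hc
    obtain ⟨y, hy⟩ := Ideal.mem_span_singleton'.1 hmem
    have h0 : f₀ (c 0 • (1 : GrpRing) + c 1 • MonoidAlgebra.single gh 1
        + c 2 • MonoidAlgebra.single gα 1) = 0 := by
      rw [← hy]; exact key y
    rw [map_add, map_add, map_smul, map_smul, map_smul] at h0
    have h1 : f₀ (1 : GrpRing) = vv 1 := by
      rw [show (1 : GrpRing) = MonoidAlgebra.single 1 1 from MonoidAlgebra.one_def,
        f₀_single, one_smul]
    rw [h1, f₀_single, f₀_single, one_smul, one_smul] at h0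
    have hv1 : vv 1 = ![1,0,0] := by decide
    have hvh : vv gh = ![0,1,0] := by decide
    have hvα : vv gα = ![0,0,1] := by decide
    rw [hv1, hvh, hvα] at h0
    intro i
    have := congrFun h0 i
    fin_cases i <;> simpa using this
  -- spanning
  have hspan : ⊤ ≤ Submodule.span ℤ (Set.range w) := by
    rintro x -
    obtain ⟨y, rfl⟩ := Ideal.Quotient.mk_surjective x
    show εq y ∈ _
    induction y using MonoidAlgebra.induction_linear with
    | zero => rw [map_zero]; exact Submodule.zero_mem _
    | add f g hf hg => rw [map_add]; exact Submodule.add_mem _ hf hg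
    | single a b =>
      have hb : (MonoidAlgebra.single a b : GrpRing) = b • MonoidAlgebra.single a 1 := by
        rw [MonoidAlgebra.smul_single, smul_eq_mul, mul_one]
      rw [hb, hεsmul]
      refine Submodule.smul_mem _ _ ?_
      have h1mem : εq 1 ∈ Submodule.span ℤ (Set.range w) :=
        Submodule.subset_span ⟨0, rfl⟩
      have hhmem : εq (MonoidAlgebra.single gh 1) ∈ Submodule.span ℤ (Set.range w) :=
        Submodule.subset_span ⟨1, rfl⟩
      have hαmem : εq (MonoidAlgebra.single gα 1) ∈ Submodule.span ℤ (Set.range w) :=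
        Submodule.subset_span ⟨2, rfl⟩
      rcases cases4 a with h | h | h | h <;> subst h
      · exact h1mem
      · exact hhmem
      · exact hαmem
      · have : εq (MonoidAlgebra.single (gα * gh) (1:ℤ))
            = εq (MonoidAlgebra.single gα 1) - εq (MonoidAlgebra.single gh 1) + εq 1 := by
          have h2 : εq (MonoidAlgebra.single (gα * gh) 1 - MonoidAlgebra.single gα 1
              + MonoidAlgebra.single gh 1 - 1) = 0 := hrel
          rw [map_sub, map_add, map_sub] at h2
          linear_combination h2
        rw [this]
        exact Submodule.add_mem _ (Submodule.sub_mem _ hαmem hhmem) h1mem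
  refine ⟨Module.Basis.mk hli hspan, ?_, ?_, ?_⟩ <;>
    simp [Module.Basis.mk_apply, hw]
end
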